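/- Quantitative leakage bound (core inequality in the proof of Theorem 4.2): Let C, B > 0, let q ∈ ℝ^d, keys k_j ∈ ℝ^d and values v_j ∈ ℝ^m for j ∈ {1,…,N} with ‖v_j‖₂ ≤ C for all j, and let S ⊆ {1,…,N} with |S| = M ≥ 1. Suppose |⟨q,k_j⟩| ≤ C² for all j ∈ S and ⟨q,k_j⟩ ≤ C² − B² for all j ∉ S. Then ‖ (∑_{j∈S} exp(⟨q,k_j⟩)·v_j)/(∑_{j∈S} exp(⟨q,k_j⟩)) − (∑_{j=1}^{N} exp(⟨q,k_j⟩)·v_j)/(∑_{j=1}^{N} exp(⟨q,k_j⟩)) ‖₂ ≤ 2·N·C·exp(2C² − B²)/M. -/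

import Mathlib

/-!
The full attention output is a convex combination of the output over `S` and the output over
its complement, both of norm at most `C`, so it differs from the output over `S` by at most `2C`
times the ratio of the total weight outside `S` to the total weight on `S`. The score bounds
make the former at most `N e^{C² - B²}` and the latter at least `M e^{-C²}`.
-/

open Matrix Finset

section WeightedMean

variable {ι E : Type*} [NormedAddCommGroup E] [NormedSpace ℝ E]

theorem norm_sum_smul_le_sum_mul (s : Finset ι) {w : ι → ℝ} {v : ι → E} {C : ℝ}
    (hw : ∀ j ∈ s, 0 ≤ w j) (hv : ∀ j ∈ s, ‖v j‖ ≤ C) :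
    ‖∑ j ∈ s, w j • v j‖ ≤ (∑ j ∈ s, w j) * C :=
  calc ‖∑ j ∈ s, w j • v j‖ ≤ ∑ j ∈ s, ‖w j • v j‖ := norm_sum_le _ _
    _ ≤ ∑ j ∈ s, w j * C := sum_le_sum fun j hj => by
        rw [norm_smul, Real.norm_of_nonneg (hw j hj)]
        exact mul_le_mul_of_nonneg_left (hv j hj) (hw j hj)
    _ = (∑ j ∈ s, w j) * C := (sum_mul _ _ _).symm

theorem norm_weightedMean_sub_weightedMean_le [DecidableEq ι] {s t : Finset ι} (hst : s ⊆ t)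
    {w : ι → ℝ} {v : ι → E} {C : ℝ} (hw : ∀ j ∈ t, 0 ≤ w j) (hs : 0 < ∑ j ∈ s, w j)
    (hv : ∀ j ∈ t, ‖v j‖ ≤ C) :
    ‖(∑ j ∈ s, w j)⁻¹ • ∑ j ∈ s, w j • v j - (∑ j ∈ t, w j)⁻¹ • ∑ j ∈ t, w j • v j‖
      ≤ 2 * C * (∑ j ∈ t \ s, w j) / ∑ j ∈ s, w j := by
  obtain ⟨j₀, hj₀⟩ := nonempty_of_sum_ne_zero hs.ne'
  have hC : 0 ≤ C := (norm_nonneg _).trans (hv j₀ (hst hj₀))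
  have hw_s : ∀ j ∈ s, 0 ≤ w j := fun j hj => hw j (hst hj)
  have hw_out : ∀ j ∈ t \ s, 0 ≤ w j := fun j hj => hw j (sdiff_subset hj)
  set A := ∑ j ∈ s, w j
  set R := ∑ j ∈ t \ s, w j
  have hR : 0 ≤ R := sum_nonneg hw_out
  have hx : ‖∑ j ∈ s, w j • v j‖ ≤ A * C :=
    norm_sum_smul_le_sum_mul s hw_s fun j hj => hv j (hst hj)
  have hy : ‖∑ j ∈ t \ s, w j • v j‖ ≤ R * C :=
    norm_sum_smul_le_sum_mul (t \ s) hw_out fun j hj => hv j (sdiff_subset hj)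
  have hinv : 0 ≤ A⁻¹ - (R + A)⁻¹ := sub_nonneg.mpr (inv_anti₀ hs (by linarith))
  rw [← sum_sdiff hst, ← sum_sdiff (f := fun j => w j • v j) hst]
  calc ‖A⁻¹ • ∑ j ∈ s, w j • v j - (R + A)⁻¹ • (∑ j ∈ t \ s, w j • v j + ∑ j ∈ s, w j • v j)‖
      = ‖(A⁻¹ - (R + A)⁻¹) • ∑ j ∈ s, w j • v j - (R + A)⁻¹ • ∑ j ∈ t \ s, w j • v j‖ := by
        congr 1; module
    _ ≤ (A⁻¹ - (R + A)⁻¹) * (A * C) + (R + A)⁻¹ * (R * C) := by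
        refine (norm_sub_le _ _).trans (add_le_add ?_ ?_)
        · rw [norm_smul, Real.norm_of_nonneg hinv]
          exact mul_le_mul_of_nonneg_left hx hinv
        · rw [norm_smul, Real.norm_of_nonneg (by positivity)]
          exact mul_le_mul_of_nonneg_left hy (by positivity)
    _ = 2 * C * R / (R + A) := by field_simp; ring
    _ ≤ 2 * C * R / A := div_le_div_of_nonneg_left (by positivity) hs (by linarith)

end WeightedMean

theorem quantitative_leakage_bound_general {d m N : ℕ} (C B : ℝ) (hC : 0 < C)
    (q : Fin d → ℝ) (k : Fin N → Fin d → ℝ) (v : Fin N → EuclideanSpace ℝ (Fin m))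
    (hv : ∀ j, ‖v j‖ ≤ C)
    (S : Finset (Fin N)) (M : ℕ) (hSM : S.card = M) (hM : 1 ≤ M)
    (hin : ∀ j ∈ S, |q ⬝ᵥ k j| ≤ C ^ 2)
    (hout : ∀ j ∉ S, q ⬝ᵥ k j ≤ C ^ 2 - B ^ 2) :
    ‖(∑ j ∈ S, Real.exp (q ⬝ᵥ k j))⁻¹ • ∑ j ∈ S, Real.exp (q ⬝ᵥ k j) • v j
      - (∑ j, Real.exp (q ⬝ᵥ k j))⁻¹ • ∑ j, Real.exp (q ⬝ᵥ k j) • v j‖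
    ≤ 2 * N * C * Real.exp (2 * C ^ 2 - B ^ 2) / M := by
  set w := fun j => Real.exp (q ⬝ᵥ k j)
  have hM' : (0 : ℝ) < M := by exact_mod_cast hM
  have h_in : M * Real.exp (-C ^ 2) ≤ ∑ j ∈ S, w j := by
    rw [← hSM, ← nsmul_eq_mul]
    exact card_nsmul_le_sum S w _ fun j hj =>
      Real.exp_le_exp.mpr (by linarith [(abs_le.mp (hin j hj)).1])
  have h_out : ∑ j ∈ univ \ S, w j ≤ N * Real.exp (C ^ 2 - B ^ 2) :=
    calc ∑ j ∈ univ \ S, w j ≤ #(univ \ S) • Real.exp (C ^ 2 - B ^ 2) :=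
          sum_le_card_nsmul _ w _ fun j hj => Real.exp_le_exp.mpr (hout j (mem_sdiff.mp hj).2)
      _ ≤ N * Real.exp (C ^ 2 - B ^ 2) := by
          rw [nsmul_eq_mul]
          gcongr
          simpa using card_le_univ (univ \ S)
  calc _ ≤ 2 * C * (∑ j ∈ univ \ S, w j) / ∑ j ∈ S, w j :=
        norm_weightedMean_sub_weightedMean_le (subset_univ S) (fun j _ => (Real.exp_pos _).le)
          (lt_of_lt_of_le (by positivity) h_in) fun j _ => hv j
    _ ≤ 2 * C * (N * Real.exp (C ^ 2 - B ^ 2)) / (M * Real.exp (-C ^ 2)) := by gcongr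
    _ = 2 * N * C * Real.exp (2 * C ^ 2 - B ^ 2) / M := by
        rw [Real.exp_neg, show 2 * C ^ 2 - B ^ 2 = (C ^ 2 - B ^ 2) + C ^ 2 by ring, Real.exp_add]
        field_simp

/-- Quantitative leakage bound: if `‖v_j‖₂ ≤ C` for all `j`, the in-block
scores satisfy `|⟨q,k_j⟩| ≤ C²` for `j ∈ S` (with `|S| = M ≥ 1`) and the
out-of-block scores satisfy `⟨q,k_j⟩ ≤ C² - B²` for `j ∉ S`, then the attention
output over `S` differs from the full attention output by at most
`2·N·C·exp(2C² - B²)/M`. -/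
theorem quantitative_leakage_bound {d m N : ℕ} (C B : ℝ) (hC : 0 < C) (hB : 0 < B)
    (q : Fin d → ℝ) (k : Fin N → Fin d → ℝ) (v : Fin N → EuclideanSpace ℝ (Fin m))
    (hv : ∀ j, ‖v j‖ ≤ C)
    (S : Finset (Fin N)) (M : ℕ) (hSM : S.card = M) (hM : 1 ≤ M)
    (hin : ∀ j ∈ S, |q ⬝ᵥ k j| ≤ C ^ 2)
    (hout : ∀ j ∉ S, q ⬝ᵥ k j ≤ C ^ 2 - B ^ 2) :
    ‖(∑ j ∈ S, Real.exp (q ⬝ᵥ k j))⁻¹ • ∑ j ∈ S, Real.exp (q ⬝ᵥ k j) • v j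
      - (∑ j, Real.exp (q ⬝ᵥ k j))⁻¹ • ∑ j, Real.exp (q ⬝ᵥ k j) • v j‖
    ≤ 2 * N * C * Real.exp (2 * C ^ 2 - B ^ 2) / M :=
  quantitative_leakage_bound_general C B hC q k v hv S M hSM hM hin hout
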